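/- Let m, n, q be positive odd integers. Then the series Σ_{k=1}^{∞} 1 / ( Π_{j=0}^{m−1} F_{nk+njq} · Π_{j=m+1}^{2m} F_{nk+njq} ) converges, and its sum equals (1 / L_{mnq}) · Σ_{k=1}^{q} 1 / ( Π_{j=0}^{2m−1} F_{nk+njq} ). -/

import Mathlib

open Filter Topology

/-- The Lucas numbers: `L 0 = 2`, `L 1 = 1`, `L (n+2) = L (n+1) + L n`. -/
def lucas : ℕ → ℕ
  | 0 => 2
  | 1 => 1
  | n + 2 => lucas (n + 1) + lucas n

/-!
By Binet's formulas, `F_{a+2b} = L_b F_{a+b} + F_a` for odd `b`. With `b = mnq` and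
`f j = F_{nk+njq}` this reads `f (2m) = L_{mnq} f m + f 0`, which turns the `k`-th summand
into `(T_k - T_{k+q}) / L_{mnq}` with `T_k = 1 / Π_{j<2m} F_{nk+njq}`. The series thus
telescopes with lag `q`, and `T_k → 0`.
-/

open Finset Real
open scoped goldenRatio

lemma lucas_pos : ∀ n, 0 < lucas n
  | 0 => by decide
  | 1 => by decide
  | n + 2 => Nat.add_pos_left (lucas_pos (n + 1)) _

lemma coe_lucas_eq : ∀ n, (lucas n : ℝ) = φ ^ n + ψ ^ n
  | 0 => by norm_num [lucas]
  | 1 => by simp [lucas, goldenRatio_add_goldenConj]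
  | n + 2 => by
    rw [lucas, Nat.cast_add, coe_lucas_eq (n + 1), coe_lucas_eq n]
    linear_combination (-φ ^ n) * goldenRatio_sq - ψ ^ n * goldenConj_sq

lemma pow_add_two_mul_sub_pow_add_two_mul {R : Type*} [CommRing R] (x y : R) (a b : ℕ) :
    x ^ (a + 2 * b) - y ^ (a + 2 * b) =
      (x ^ b + y ^ b) * (x ^ (a + b) - y ^ (a + b)) - (x * y) ^ b * (x ^ a - y ^ a) := by
  ring

lemma coe_fib_add_two_mul (a b : ℕ) :
    (Nat.fib (a + 2 * b) : ℝ) = lucas b * Nat.fib (a + b) - (-1) ^ b * Nat.fib a := by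
  rw [coe_fib_eq, coe_fib_eq, coe_fib_eq, coe_lucas_eq, ← goldenRatio_mul_goldenConj,
    pow_add_two_mul_sub_pow_add_two_mul]
  ring

lemma coe_fib_add_two_mul_of_odd {b : ℕ} (hb : Odd b) (a : ℕ) :
    (Nat.fib (a + 2 * b) : ℝ) = lucas b * Nat.fib (a + b) + Nat.fib a := by
  rw [coe_fib_add_two_mul, hb.neg_one_pow]
  ring

lemma one_div_prod_skip_middle_eq {K : Type*} [Field K] {f : ℕ → K} {m : ℕ} {L : K}
    (hL : L ≠ 0) (hf : ∀ j ≤ 2 * m, f j ≠ 0) (h : f (2 * m) = L * f m + f 0) :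
    1 / ((∏ j ∈ range m, f j) * ∏ j ∈ Icc (m + 1) (2 * m), f j) =
      (1 / ∏ j ∈ range (2 * m), f j - 1 / ∏ j ∈ range (2 * m), f (j + 1)) / L := by
  -- all three fractions have the common denominator `∏ j ≤ 2m, f j`
  have hP : ∏ j ∈ range (2 * m + 1), f j =
      (∏ j ∈ range m, f j) * f m * ∏ j ∈ Icc (m + 1) (2 * m), f j := by
    rw [← prod_range_mul_prod_Ico f (by omega : m + 1 ≤ 2 * m + 1), prod_range_succ,
      Ico_add_one_right_eq_Icc]
  have hP0 : ∏ j ∈ range (2 * m + 1), f j ≠ 0 :=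
    prod_ne_zero_iff.2 fun j hj => hf j (Nat.lt_succ_iff.1 (mem_range.1 hj))
  have hfm : f m ≠ 0 := hf m (by omega)
  have hf0 : f 0 ≠ 0 := hf 0 (by omega)
  have hf2m : f (2 * m) ≠ 0 := hf (2 * m) le_rfl
  have e0 : 1 / ((∏ j ∈ range m, f j) * ∏ j ∈ Icc (m + 1) (2 * m), f j) =
      f m / ∏ j ∈ range (2 * m + 1), f j := by
    rw [hP] at hP0 ⊢; field_simp
  have e1 : 1 / ∏ j ∈ range (2 * m), f j = f (2 * m) / ∏ j ∈ range (2 * m + 1), f j := by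
    rw [prod_range_succ] at hP0 ⊢; field_simp
  have e2 : 1 / ∏ j ∈ range (2 * m), f (j + 1) = f 0 / ∏ j ∈ range (2 * m + 1), f j := by
    rw [prod_range_succ'] at hP0 ⊢; field_simp
  rw [e0, e1, e2, h]
  field_simp
  ring

lemma one_div_prod_fib_skip_middle_eq {m n q k : ℕ} (hodd : Odd (m * n * q)) (hn : 0 < n)
    (hk : 0 < k) :
    1 / ((∏ j ∈ range m, (Nat.fib (n * k + n * j * q) : ℝ)) *
        ∏ j ∈ Icc (m + 1) (2 * m), (Nat.fib (n * k + n * j * q) : ℝ)) =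
      (1 / ∏ j ∈ range (2 * m), (Nat.fib (n * k + n * j * q) : ℝ) -
        1 / ∏ j ∈ range (2 * m), (Nat.fib (n * (k + q) + n * j * q) : ℝ)) /
        lucas (m * n * q) := by
  have hshift : ∏ j ∈ range (2 * m), (Nat.fib (n * (k + q) + n * j * q) : ℝ) =
      ∏ j ∈ range (2 * m), (Nat.fib (n * k + n * (j + 1) * q) : ℝ) :=
    prod_congr rfl fun j _ => by ring_nf
  have hrec : (Nat.fib (n * k + n * (2 * m) * q) : ℝ) =
      lucas (m * n * q) * Nat.fib (n * k + n * m * q) + Nat.fib (n * k + n * 0 * q) := by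
    have h := coe_fib_add_two_mul_of_odd hodd (n * k)
    rwa [show n * (2 * m) * q = 2 * (m * n * q) by ring, show n * m * q = m * n * q by ring,
      mul_zero, zero_mul, add_zero]
  rw [hshift]
  exact one_div_prod_skip_middle_eq (by exact_mod_cast (lucas_pos _).ne')
    (fun j _ => by exact_mod_cast (Nat.fib_pos.2 (by positivity)).ne') hrec

lemma sum_range_sub_shift {M : Type*} [AddCommGroup M] (g : ℕ → M) (N q : ℕ) :
    ∑ k ∈ range N, (g k - g (k + q)) =
      ∑ k ∈ range q, g k - ∑ k ∈ range q, g (N + k) := by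
  have h1 := sum_range_add g q N
  have h2 := sum_range_add g N q
  rw [add_comm q N, h2] at h1
  rw [sum_sub_distrib, eq_sub_iff_add_eq, sub_add_eq_add_sub, h1]
  simp only [add_comm _ q]
  abel

lemma tendsto_sum_Icc_sub_shift {M : Type*} [AddCommGroup M] [TopologicalSpace M]
    [IsTopologicalAddGroup M] {g : ℕ → M} (hg : Tendsto g atTop (𝓝 0)) (q : ℕ) :
    Tendsto (fun N => ∑ k ∈ Icc 1 N, (g k - g (k + q))) atTop
      (𝓝 (∑ k ∈ Icc 1 q, g k)) := by
  have hIcc (N : ℕ) (u : ℕ → M) : ∑ k ∈ Icc 1 N, u k = ∑ k ∈ range N, u (k + 1) := by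
    rw [← Ico_add_one_right_eq_Icc, sum_Ico_eq_sum_range, Nat.add_sub_cancel]
    simp only [add_comm 1]
  have hsum (N : ℕ) : ∑ k ∈ Icc 1 N, (g k - g (k + q)) =
      ∑ k ∈ Icc 1 q, g k - ∑ k ∈ range q, g (N + k + 1) := by
    rw [hIcc, hIcc, ← sum_range_sub_shift (fun k => g (k + 1))]
    simp only [add_right_comm _ q 1]
  have htail : Tendsto (fun N => ∑ k ∈ range q, g (N + k + 1)) atTop (𝓝 0) := by
    simpa using tendsto_finsetSum (range q) fun k _ =>
      hg.comp ((tendsto_add_atTop_nat (k + 1)).congr fun N => by ring)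
  rw [← sub_zero (∑ k ∈ Icc 1 q, g k)]
  exact (tendsto_const_nhds.sub htail).congr fun N => (hsum N).symm

lemma tendsto_fib_atTop : Tendsto Nat.fib atTop atTop :=
  tendsto_atTop_atTop.2 fun b =>
    ⟨b + 1, fun n hn => by have := Nat.le_fib_add_one n; omega⟩

lemma tendsto_one_div_prod_fib {n r : ℕ} (hn : 0 < n) (hr : 0 < r) (c : ℕ → ℕ) :
    Tendsto (fun k => 1 / ∏ j ∈ range r, (Nat.fib (n * k + c j) : ℝ)) atTop (𝓝 0) := by
  have hlim : Tendsto (fun k => 1 / (Nat.fib (n * k) : ℝ)) atTop (𝓝 0) := by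
    simp only [one_div]
    exact (tendsto_natCast_atTop_atTop.comp
      (tendsto_fib_atTop.comp (tendsto_id.const_mul_atTop' hn))).inv_tendsto_atTop
  refine squeeze_zero' (Eventually.of_forall fun k => by positivity) ?_ hlim
  filter_upwards [eventually_gt_atTop 0] with k hk
  have hpos : ∀ j, 0 < Nat.fib (n * k + c j) := fun j => Nat.fib_pos.2 (by positivity)
  have hle : Nat.fib (n * k) ≤ ∏ j ∈ range r, Nat.fib (n * k + c j) :=
    (Nat.fib_mono (Nat.le_add_right _ (c 0))).trans <|
      single_le_prod' (f := fun j => Nat.fib (n * k + c j)) (fun j _ => hpos j) (mem_range.2 hr)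
  gcongr
  · exact_mod_cast Nat.fib_pos.2 (by positivity)
  · exact_mod_cast hle

theorem stmt_5_general (m n q : ℕ) (hm : Odd m) (hn : Odd n) (hq : Odd q) :
    Tendsto (fun N => ∑ k ∈ Finset.Icc 1 N,
        (1 : ℝ) / ((∏ j ∈ Finset.range m, (Nat.fib (n * k + n * j * q) : ℝ)) *
          ∏ j ∈ Finset.Icc (m + 1) (2 * m), (Nat.fib (n * k + n * j * q) : ℝ)))
      atTop
      (𝓝 ((1 / (lucas (m * n * q) : ℝ)) *
        ∑ k ∈ Finset.Icc 1 q,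
          (1 : ℝ) / ∏ j ∈ Finset.range (2 * m), (Nat.fib (n * k + n * j * q) : ℝ))) := by
  have hT : Tendsto (fun k => 1 / ∏ j ∈ range (2 * m), (Nat.fib (n * k + n * j * q) : ℝ))
      atTop (𝓝 0) :=
    tendsto_one_div_prod_fib hn.pos (by simpa using hm.pos) fun j => n * j * q
  refine ((tendsto_sum_Icc_sub_shift hT q).const_mul _).congr fun N => ?_
  rw [mul_sum]
  refine sum_congr rfl fun k hk => ?_
  rw [one_div_prod_fib_skip_middle_eq ((hm.mul hn).mul hq) hn.pos (mem_Icc.1 hk).1]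
  ring

/-- Theorem (`m`, `n`, `q` odd):
`Σ_{k=1}^{∞} 1/(Π_{j=0}^{m−1} F_{nk+njq} · Π_{j=m+1}^{2m} F_{nk+njq})
  = (1/L_{mnq}) Σ_{k=1}^{q} 1/(Π_{j=0}^{2m−1} F_{nk+njq})`. -/
theorem stmt_5 (m n q : ℕ) (hm : Odd m) (hn : Odd n) (hq : Odd q)
    (hm' : 0 < m) (hn' : 0 < n) (hq' : 0 < q) :
    Tendsto (fun N => ∑ k ∈ Finset.Icc 1 N,
        (1 : ℝ) / ((∏ j ∈ Finset.range m, (Nat.fib (n * k + n * j * q) : ℝ)) *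
          ∏ j ∈ Finset.Icc (m + 1) (2 * m), (Nat.fib (n * k + n * j * q) : ℝ)))
      atTop
      (𝓝 ((1 / (lucas (m * n * q) : ℝ)) *
        ∑ k ∈ Finset.Icc 1 q,
          (1 : ℝ) / ∏ j ∈ Finset.range (2 * m), (Nat.fib (n * k + n * j * q) : ℝ))) :=
  stmt_5_general m n q hm hn hq
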